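/- Let G be an AH-algebra and let g ∈ G. Then the following are equivalent: (i) g is invertible (there exists h ∈ G with gh = hg = 1); (ii) |g| is invertible; (iii) there exists a real number λ > 0 such that λ·1 ≤ |g|. Moreover, if g⁻¹ exists, then g⁻¹ ∈ CC(g) and the signum s := (g⁺)° − (g⁻)° of g satisfies s² = 1. -/

import Mathlib

/-- An e-ring `(R,E)`: an associative ring `R` with unity together with a set `E ⊆ R`
of effects, satisfying the Foulis axioms.  `E⁺` is realized as the additive submonoid
closure of `E` (the set of all finite sums of effects). -/
structure ERing (R : Type*) [Ring R] where
  E : Set R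
  zero_mem : (0 : R) ∈ E
  one_mem : (1 : R) ∈ E
  compl_mem : ∀ e ∈ E, 1 - e ∈ E
  epos_i : ∀ a ∈ AddSubmonoid.closure E, -a ∈ AddSubmonoid.closure E → a = 0
  epos_ii : ∀ a ∈ AddSubmonoid.closure E, 1 - a ∈ AddSubmonoid.closure E → a ∈ E
  epos_iii : ∀ a ∈ AddSubmonoid.closure E, ∀ b ∈ AddSubmonoid.closure E,
    a * b = b * a → a * b ∈ AddSubmonoid.closure E
  epos_iv : ∀ a ∈ AddSubmonoid.closure E, ∀ b ∈ AddSubmonoid.closure E,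
    a * b * a ∈ AddSubmonoid.closure E
  epos_v : ∀ a ∈ AddSubmonoid.closure E, ∀ b ∈ AddSubmonoid.closure E,
    a * b * a = 0 → a * b = 0 ∧ b * a = 0
  epos_vi : ∀ a ∈ AddSubmonoid.closure E, ∀ b ∈ AddSubmonoid.closure E,
    (a - b) ^ 2 ∈ AddSubmonoid.closure E
  zero_ne_one : (0 : R) ≠ 1

namespace ERing

variable {R : Type*} [Ring R] (er : ERing R)

/-- `E⁺`, the set of all finite sums of effects; the positive cone of the directed group. -/
def Epos : Set R := (AddSubmonoid.closure er.E : Set R)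

/-- The directed group `G = E⁺ - E⁺` of the e-ring. -/
def G : Set R := {g | ∃ a ∈ er.Epos, ∃ b ∈ er.Epos, g = a - b}

/-- The partial order on the directed group: `g ≤ h` iff `h - g ∈ E⁺`. -/
def le (g h : R) : Prop := h - g ∈ er.Epos

/-- The set of projections `P = {p ∈ G : p = p²}`. -/
def P : Set R := {p | p ∈ er.G ∧ p = p ^ 2}

/-- The commutant in `G` of a subset `A ⊆ G`. -/
def commutant (A : Set R) : Set R := {g | g ∈ er.G ∧ ∀ a ∈ A, g * a = a * g}

/-- The bicommutant in `G` of a subset `A ⊆ G`. -/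
def CC (A : Set R) : Set R := er.commutant (er.commutant A)

/-- `s` is the supremum of `A` within the subset `S` (w.r.t. the e-ring order). -/
def IsSupIn (S A : Set R) (s : R) : Prop :=
  s ∈ S ∧ (∀ a ∈ A, er.le a s) ∧ ∀ b ∈ S, (∀ a ∈ A, er.le a b) → er.le s b

/-- `s` is the infimum of `A` within the subset `S` (w.r.t. the e-ring order). -/
def IsInfIn (S A : Set R) (s : R) : Prop :=
  s ∈ S ∧ (∀ a ∈ A, er.le s a) ∧ ∀ b ∈ S, (∀ a ∈ A, er.le b a) → er.le b s

/-- Quadratic annihilation property. -/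
def HasQA : Prop := ∀ g ∈ er.G, ∀ h ∈ er.G, g * h ^ 2 * g = 0 → g * h = 0 ∧ h * g = 0

/-- Commutative Vigier property: every ascending sequence of pairwise commuting elements
of `G` bounded above in `G` has a supremum in `G` which double commutes with the sequence. -/
def HasCV : Prop :=
  ∀ g : ℕ → R, (∀ n, g n ∈ er.G) → (∀ n, er.le (g n) (g (n + 1))) →
    (∀ m n, g m * g n = g n * g m) → (∃ b ∈ er.G, ∀ n, er.le (g n) b) →
    ∃ s, er.IsSupIn er.G (Set.range g) s ∧ s ∈ er.CC (Set.range g)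

/-- `G` is an abstract Hermitian (AH) algebra: there is a semitransparent effect `½`,
`G` has quadratic annihilation, and `G` has the commutative Vigier property. -/
def IsAH : Prop := (∃ h ∈ er.E, h + h = 1) ∧ er.HasQA ∧ er.HasCV

end ERing

namespace ERing

variable {R : Type*} [Ring R] (er : ERing R)

/-- `m` is the absolute value `|g| = (g²)^(1/2)` of `g`: `m ∈ G`, `0 ≤ m`, `m² = g²`. -/
def IsAbs (g m : R) : Prop := m ∈ er.G ∧ er.le 0 m ∧ m ^ 2 = g ^ 2

/-- `a` is the positive part `g⁺ = ½(|g| + g)` of `g`, i.e. `a ∈ G` and `a + a = |g| + g`. -/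
def IsPosPart (g a : R) : Prop := a ∈ er.G ∧ ∃ m, er.IsAbs g m ∧ a + a = m + g

/-- `b` is the negative part `g⁻ = ½(|g| − g)` of `g`, i.e. `b ∈ G` and `b + b = |g| − g`. -/
def IsNegPart (g b : R) : Prop := b ∈ er.G ∧ ∃ m, er.IsAbs g m ∧ b + b = m - g

/-- `p` is the carrier projection `g°` of `g`. -/
def IsCarrier (g p : R) : Prop := p ∈ er.P ∧ ∀ h ∈ er.G, (g * h = 0 ↔ p * h = 0)

end ERing

namespace ERing

variable {R : Type*} [Ring R] [Algebra ℝ R] (er : ERing R)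

/-- The 1-norm `‖g‖ = inf {λ : 0 ≤ λ, −λ·1 ≤ g ≤ λ·1}`. -/
noncomputable def norm1 (g : R) : ℝ :=
  sInf {l : ℝ | 0 ≤ l ∧ er.le (-(l • (1 : R))) g ∧ er.le g (l • (1 : R))}

/-- The spectral lower bound `L_g = sup {λ : λ·1 ≤ g}`. -/
noncomputable def specL (g : R) : ℝ := sSup {l : ℝ | er.le (l • (1 : R)) g}

/-- The spectral upper bound `U_g = inf {λ : g ≤ λ·1}`. -/
noncomputable def specU (g : R) : ℝ := sInf {l : ℝ | er.le g (l • (1 : R))}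

/-- `p` is the spectral projection `p_{g,λ} = 1 − ((g − λ·1)⁺)°`. -/
def IsSpecProj (g : R) (l : ℝ) (p : R) : Prop :=
  ∃ a, er.IsPosPart (g - l • (1 : R)) a ∧ ∃ q, er.IsCarrier a q ∧ p = 1 - q

/-- `d` is the λ-eigenprojection `d_{g,λ} = 1 − (g − λ·1)°`. -/
def IsEigenProj (g : R) (l : ℝ) (d : R) : Prop :=
  ∃ q, er.IsCarrier (g - l • (1 : R)) q ∧ d = 1 - q

end ERing

/-!
The commutative Vigier property enters through suprema of increasing sequences of polynomials
in a single element, and through its Archimedean consequence: `0 ≤ u ≤ ε • 1` for all `ε > 0`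
forces `u = 0`. The Neumann series `∑ cⁱ` inverts `1 - c` whenever `0 ≤ c ≤ μ • 1` with
`μ < 1`, hence inverts every `m ≥ λ • 1` with `λ > 0`. Conversely a positive invertible `m` has
a positive inverse `k ≤ v • 1`, so `m ≥ v⁻¹ • 1`; and `|g|² = g²` moves invertibility between
`g` and `|g|`.

The iteration `x ↦ x + ½ (c - x²)` from `0` yields a square root of `0 ≤ c ≤ 1` commuting with
everything that commutes with `c`. With quadratic annihilation, commuting positive square roots
coincide, so `|g|` is unique and commutes with `g`. For invertible `g`, `g⁺ = |g|⁻¹ (g⁺)²` and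
`g⁻ = |g|⁻¹ (g⁻)²` are positive and orthogonal, so their carriers are orthogonal projections
whose sum fixes `g`, hence equals `1`.
-/

namespace ERing

section Cone

variable {R : Type*} [Ring R] {er : ERing R}

lemma zero_mem_Epos : (0 : R) ∈ er.Epos := (AddSubmonoid.closure er.E).zero_mem

lemma one_mem_Epos : (1 : R) ∈ er.Epos := AddSubmonoid.subset_closure er.one_mem

lemma add_mem_Epos {x y : R} (hx : x ∈ er.Epos) (hy : y ∈ er.Epos) : x + y ∈ er.Epos :=
  (AddSubmonoid.closure er.E).add_mem hx hy

lemma sum_mem_Epos {ι : Type*} {s : Finset ι} {f : ι → R} (h : ∀ i ∈ s, f i ∈ er.Epos) :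
    ∑ i ∈ s, f i ∈ er.Epos :=
  AddSubmonoid.sum_mem _ h

lemma mul_mem_Epos {x y : R} (hx : x ∈ er.Epos) (hy : y ∈ er.Epos) (hxy : Commute x y) :
    x * y ∈ er.Epos :=
  er.epos_iii x hx y hy hxy

lemma pow_mem_Epos {x : R} (hx : x ∈ er.Epos) (n : ℕ) : x ^ n ∈ er.Epos := by
  induction n with
  | zero => simpa using one_mem_Epos
  | succ n ih => rw [pow_succ]; exact mul_mem_Epos ih hx ((Commute.refl x).pow_left n)

lemma eq_zero_of_mem_Epos_of_neg_mem_Epos {x : R} (hx : x ∈ er.Epos) (hnx : -x ∈ er.Epos) :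
    x = 0 :=
  er.epos_i x hx hnx

lemma mem_G_of_mem_Epos {x : R} (hx : x ∈ er.Epos) : x ∈ er.G :=
  ⟨x, hx, 0, zero_mem_Epos, (sub_zero x).symm⟩

lemma one_mem_G : (1 : R) ∈ er.G := mem_G_of_mem_Epos one_mem_Epos

lemma add_mem_G {g h : R} (hg : g ∈ er.G) (hh : h ∈ er.G) : g + h ∈ er.G := by
  obtain ⟨a, ha, b, hb, rfl⟩ := hg
  obtain ⟨c, hc, d, hd, rfl⟩ := hh
  exact ⟨a + c, add_mem_Epos ha hc, b + d, add_mem_Epos hb hd, by abel⟩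

lemma neg_mem_G {g : R} (hg : g ∈ er.G) : -g ∈ er.G := by
  obtain ⟨a, ha, b, hb, rfl⟩ := hg
  exact ⟨b, hb, a, ha, neg_sub a b⟩

lemma sub_mem_G {g h : R} (hg : g ∈ er.G) (hh : h ∈ er.G) : g - h ∈ er.G := by
  simpa [sub_eq_add_neg] using add_mem_G hg (neg_mem_G hh)

lemma sq_mem_Epos {g : R} (hg : g ∈ er.G) : g ^ 2 ∈ er.Epos := by
  obtain ⟨a, ha, b, hb, rfl⟩ := hg
  exact er.epos_vi a ha b hb

lemma le_refl (g : R) : er.le g g := by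
  simpa [ERing.le] using zero_mem_Epos

lemma le_trans {g h k : R} (hgh : er.le g h) (hhk : er.le h k) : er.le g k := by
  simpa [ERing.le] using add_mem_Epos hhk hgh

lemma eq_zero_of_sq_eq_zero (hQA : er.HasQA) {d : R} (hd : d ∈ er.G) (h : d ^ 2 = 0) :
    d = 0 := by
  simpa using (hQA 1 one_mem_G d hd (by simp [h])).1

lemma eq_of_sq_eq_of_commute (hQA : er.HasQA) {p s : R} (hp : p ∈ er.Epos) (hs : s ∈ er.Epos)
    (hps : Commute p s) (hsq : p ^ 2 = s ^ 2) : p = s := by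
  set d := p - s
  have hdG : d ∈ er.G := sub_mem_G (mem_G_of_mem_Epos hp) (mem_G_of_mem_Epos hs)
  have hpd : Commute p d := (Commute.refl p).sub_right hps
  have hsd : Commute s d := hps.symm.sub_right (Commute.refl s)
  have hsum : p * d ^ 2 + s * d ^ 2 = 0 := by
    rw [← add_mul, sq, ← mul_assoc, ← hps.sq_sub_sq, hsq, sub_self, zero_mul]
  have hpd2 : p * d ^ 2 = 0 := eq_zero_of_mem_Epos_of_neg_mem_Epos
    (mul_mem_Epos hp (sq_mem_Epos hdG) (hpd.pow_right 2))
    (neg_eq_of_add_eq_zero_right hsum ▸ mul_mem_Epos hs (sq_mem_Epos hdG) (hsd.pow_right 2))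
  have hsd2 : s * d ^ 2 = 0 := by rwa [hpd2, zero_add] at hsum
  have hd3 : d ^ 3 = 0 := by rw [pow_succ', sub_mul, hpd2, hsd2, sub_zero]
  have hd4 : (d ^ 2) ^ 2 = 0 := by rw [← pow_mul, pow_succ', hd3, mul_zero]
  exact sub_eq_zero.1 <| eq_zero_of_sq_eq_zero hQA hdG <|
    eq_zero_of_sq_eq_zero hQA (mem_G_of_mem_Epos (sq_mem_Epos hdG)) hd4

lemma mem_Epos_of_inv {m k : R} (hm : m ∈ er.Epos) (hk : k ∈ er.G) (hmk : m * k = 1)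
    (hkm : k * m = 1) : k ∈ er.Epos := by
  have h₁ : m * k ^ 2 = k := by rw [sq, ← mul_assoc, hmk, one_mul]
  have h₂ : k ^ 2 * m = k := by rw [sq, mul_assoc, hkm, mul_one]
  exact h₁ ▸ mul_mem_Epos hm (sq_mem_Epos hk) (h₁.trans h₂.symm)

lemma mem_Epos_of_sq_eq_mul {m k z : R} (hm : m ∈ er.Epos) (hk : k ∈ er.G) (hmk : m * k = 1)
    (hkm : k * m = 1) (hz : z ∈ er.G) (hmz : Commute m z) (hsq : z ^ 2 = m * z) :
    z ∈ er.Epos := by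
  have hkz : Commute k z := Commute.units_inv_left (u := ⟨m, k, hmk, hkm⟩) hmz
  have hz' : k * z ^ 2 = z := by rw [hsq, ← mul_assoc, hkm, one_mul]
  exact hz' ▸ mul_mem_Epos (mem_Epos_of_inv hm hk hmk hkm) (sq_mem_Epos hz) (hkz.pow_right 2)

lemma IsAbs.mem_Epos {g m : R} (hm : er.IsAbs g m) : m ∈ er.Epos := by
  simpa [ERing.le] using hm.2.1

lemma mem_CC_singleton_of_inv {g h : R} (hh : h ∈ er.G) (hgh : g * h = 1) (hhg : h * g = 1) :
    h ∈ er.CC {g} := by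
  refine ⟨hh, fun j ⟨_, hj⟩ => ?_⟩
  have hjg : j * g = g * j := hj g rfl
  calc h * j = h * (j * g) * h := by rw [mul_assoc, mul_assoc, hgh, mul_one]
    _ = j * h := by rw [hjg, ← mul_assoc, hhg, one_mul]

end Cone

section Real

variable {R : Type*} [Ring R] [Algebra ℝ R] {er : ERing R}

def IsCone (er : ERing R) : Prop := ∀ l : ℝ, 0 ≤ l → ∀ a ∈ er.Epos, l • a ∈ er.Epos

lemma smul_mem_Epos (hs : er.IsCone) {l : ℝ} (hl : 0 ≤ l) {x : R} (hx : x ∈ er.Epos) :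
    l • x ∈ er.Epos :=
  hs l hl x hx

lemma smul_mem_G (hs : er.IsCone) (l : ℝ) {g : R} (hg : g ∈ er.G) : l • g ∈ er.G := by
  obtain ⟨a, ha, b, hb, rfl⟩ := hg
  rcases le_total 0 l with hl | hl
  · exact ⟨l • a, smul_mem_Epos hs hl ha, l • b, smul_mem_Epos hs hl hb, smul_sub l a b⟩
  · refine ⟨(-l) • b, smul_mem_Epos hs (neg_nonneg.2 hl) hb,
      (-l) • a, smul_mem_Epos hs (neg_nonneg.2 hl) ha, ?_⟩
    simp only [neg_smul, smul_sub]
    abel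

lemma smul_le_smul (hs : er.IsCone) {l : ℝ} (hl : 0 ≤ l) {g h : R} (hgh : er.le g h) :
    er.le (l • g) (l • h) := by
  simpa [ERing.le, smul_sub] using smul_mem_Epos hs hl hgh

lemma smul_one_le_smul_one (hs : er.IsCone) {l l' : ℝ} (h : l ≤ l') :
    er.le (l • (1 : R)) (l' • 1) := by
  simpa [ERing.le, sub_smul] using smul_mem_Epos hs (sub_nonneg.2 h) (one_mem_Epos (er := er))

lemma mul_mem_G (hs : er.IsCone) {g h : R} (hg : g ∈ er.G) (hh : h ∈ er.G)
    (hgh : Commute g h) : g * h ∈ er.G := by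
  have hpol : g * h = (2⁻¹ : ℝ) • ((g + h) ^ 2 - g ^ 2 - h ^ 2) := by
    rw [hgh.add_sq, mul_assoc, two_mul]
    module
  rw [hpol]
  exact smul_mem_G hs _ <| sub_mem_G (sub_mem_G (mem_G_of_mem_Epos (sq_mem_Epos (add_mem_G hg hh)))
    (mem_G_of_mem_Epos (sq_mem_Epos hg))) (mem_G_of_mem_Epos (sq_mem_Epos hh))

/-- Each effect `e` lies below `1` because `1 - e ∈ E`. -/
lemma exists_le_smul_one (hs : er.IsCone) {g : R} (hg : g ∈ er.G) :
    ∃ v : ℝ, 0 < v ∧ er.le g (v • 1) := by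
  obtain ⟨a, ha, b, hb, rfl⟩ := hg
  have hbound : ∃ n : ℕ, er.le a ((n : ℝ) • 1) := by
    induction ha using AddSubmonoid.closure_induction with
    | mem e he =>
      exact ⟨1, by simpa [ERing.le, Epos] using AddSubmonoid.subset_closure (er.compl_mem e he)⟩
    | zero => exact ⟨0, by simpa [ERing.le] using zero_mem_Epos⟩
    | add x y _ _ hx hy =>
      obtain ⟨n, hn⟩ := hx
      obtain ⟨k, hk⟩ := hy
      refine ⟨n + k, ?_⟩
      have hsum : ((n + k : ℕ) : ℝ) • (1 : R) - (x + y) =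
          ((n : ℝ) • 1 - x) + ((k : ℝ) • 1 - y) := by
        push_cast; rw [add_smul]; abel
      show _ ∈ er.Epos
      rw [hsum]
      exact add_mem_Epos hn hk
  obtain ⟨n, hn⟩ := hbound
  refine ⟨n + 1, by positivity,
    le_trans ?_ (le_trans hn (smul_one_le_smul_one hs (by linarith)))⟩
  simpa [ERing.le] using hb

lemma pow_le_pow_smul_one (hs : er.IsCone) {x : R} (hx : x ∈ er.Epos) {u : ℝ} (hu : 0 ≤ u)
    (hxu : er.le x (u • 1)) (n : ℕ) : er.le (x ^ n) (u ^ n • 1) := by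
  induction n with
  | zero => simpa using le_refl (1 : R)
  | succ n ih =>
    have key : u ^ (n + 1) • (1 : R) - x ^ (n + 1) =
        u ^ n • (u • 1 - x) + (u ^ n • 1 - x ^ n) * x := by
      simp only [smul_sub, sub_mul, smul_mul_assoc, one_mul, smul_smul, pow_succ]
      abel
    have hcomm : Commute (u ^ n • (1 : R) - x ^ n) x :=
      ((Commute.one_left x).smul_left _).sub_left ((Commute.refl x).pow_left n)
    show _ ∈ er.Epos
    rw [key]
    exact add_mem_Epos (smul_mem_Epos hs (pow_nonneg hu n) hxu) (mul_mem_Epos ih hx hcomm)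

/-- The Archimedean property, obtained from the Vigier supremum of the multiples `n • u`. -/
lemma eq_zero_of_le_smul_one (hCV : er.HasCV) (hs : er.IsCone) {u : R} (hu : u ∈ er.Epos)
    (hε : ∀ ε : ℝ, 0 < ε → er.le u (ε • 1)) : u = 0 := by
  set x : ℕ → R := fun n => (n : ℝ) • u
  have hstep : ∀ n, x (n + 1) - x n = u := fun n => by
    simp only [x, Nat.cast_succ, add_smul, one_smul]; abel
  have hbdd : ∀ n, er.le (x n) 1 := by
    rintro (_ | n)
    · simpa [x, ERing.le] using one_mem_Epos (er := er)
    · have hn : (0 : ℝ) < n + 1 := by positivity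
      have := smul_le_smul hs hn.le (hε _ (inv_pos.2 hn))
      rw [smul_smul, mul_inv_cancel₀ hn.ne', one_smul] at this
      simpa [x] using this
  obtain ⟨s, ⟨hsG, hub, hmin⟩, -⟩ := hCV x (fun n => smul_mem_G hs _ (mem_G_of_mem_Epos hu))
    (fun n => by simpa [ERing.le, hstep] using hu)
    (fun m n => ((Commute.refl u).smul_left _).smul_right _) ⟨1, one_mem_G, hbdd⟩
  have hle : er.le s (s - u) := hmin _ (sub_mem_G hsG (mem_G_of_mem_Epos hu)) <| by
    rintro _ ⟨n, rfl⟩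
    have := hub _ ⟨n + 1, rfl⟩
    simpa [ERing.le, ← hstep n, sub_sub, add_comm] using this
  exact eq_zero_of_mem_Epos_of_neg_mem_Epos hu (by simpa [ERing.le] using hle)

end Real

section Inverse

variable {R : Type*} [Ring R] [Algebra ℝ R] {er : ERing R}

lemma exists_inv_of_sq_eq (hs : er.IsCone) {p q h : R} (hp : p ∈ er.G) (hpq : p ^ 2 = q ^ 2)
    (hh : h ∈ er.G) (hqh : q * h = 1) (hhq : h * q = 1) :
    ∃ k ∈ er.G, p * k = 1 ∧ k * p = 1 := by
  have hright : p * (p * h ^ 2) = 1 := by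
    rw [← mul_assoc, ← sq, hpq, sq, sq, mul_assoc, ← mul_assoc q h h, hqh, one_mul, hqh]
  have hleft : h ^ 2 * p * p = 1 := by
    rw [mul_assoc, ← sq, hpq, sq, sq, mul_assoc, ← mul_assoc h q q, hhq, one_mul, hhq]
  have hcomm : h ^ 2 * p = p * h ^ 2 := left_inv_eq_right_inv hleft hright
  exact ⟨p * h ^ 2, mul_mem_G hs hp (mem_G_of_mem_Epos (sq_mem_Epos hh)) hcomm.symm, hright,
    hcomm ▸ hleft⟩

lemma exists_smul_one_le_of_inv (hs : er.IsCone) {m k : R} (hm : m ∈ er.Epos) (hk : k ∈ er.G)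
    (hmk : m * k = 1) (hkm : k * m = 1) : ∃ l : ℝ, 0 < l ∧ er.le (l • 1) m := by
  obtain ⟨v, hv, hkv⟩ := exists_le_smul_one hs hk
  have hprod : m * (v • 1 - k) = v • m - 1 := by rw [mul_sub, mul_smul_comm, mul_one, hmk]
  have hcomm : Commute m (v • 1 - k) :=
    ((Commute.one_right m).smul_right v).sub_right (hmk.trans hkm.symm)
  have hvm : v • m - 1 ∈ er.Epos := hprod ▸ mul_mem_Epos hm hkv hcomm
  refine ⟨v⁻¹, inv_pos.2 hv, ?_⟩
  have hscale : m - v⁻¹ • (1 : R) = v⁻¹ • (v • m - 1) := by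
    rw [smul_sub, smul_smul, inv_mul_cancel₀ hv.ne', one_smul]
  show _ ∈ er.Epos
  rw [hscale]
  exact smul_mem_Epos hs (inv_nonneg.2 hv.le) hvm

lemma geom_sum_le_smul_one (hs : er.IsCone) {c : R} (hc : c ∈ er.Epos) {μ : ℝ} (hμ1 : μ < 1)
    (hcμ : er.le c (μ • 1)) (n : ℕ) :
    er.le (∑ i ∈ Finset.range n, c ^ i) ((1 - μ)⁻¹ • 1) := by
  set x := ∑ i ∈ Finset.range n, c ^ i
  have hx : x ∈ er.Epos := sum_mem_Epos fun i _ => pow_mem_Epos hc i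
  have hcx : Commute c x := Commute.sum_right _ _ _ fun i _ => (Commute.refl c).pow_right i
  have hx1 : er.le ((1 - μ) • x) 1 := by
    have h : (1 - c) * x = 1 - c ^ n := mul_neg_geom_sum c n
    have hsplit : 1 - (1 - μ) • x = c ^ n + (μ • 1 - c) * x := by
      rw [show c ^ n = 1 - (1 - c) * x by rw [h]; abel]
      simp only [sub_mul, sub_smul, one_mul, one_smul, smul_mul_assoc]
      abel
    show _ ∈ er.Epos
    rw [hsplit]
    exact add_mem_Epos (pow_mem_Epos hc n)
      (mul_mem_Epos hcμ hx (((Commute.one_left x).smul_left μ).sub_left hcx))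
  have hμ : 0 < 1 - μ := sub_pos.2 hμ1
  simpa [smul_smul, inv_mul_cancel₀ hμ.ne'] using smul_le_smul hs (inv_nonneg.2 hμ.le) hx1

lemma eq_zero_of_le_pow_smul_one (hCV : er.HasCV) (hs : er.IsCone) {u : R} (hu : u ∈ er.Epos)
    {μ : ℝ} (hμ1 : μ < 1) (h : ∀ n : ℕ, er.le u (μ ^ n • 1)) : u = 0 :=
  eq_zero_of_le_smul_one hCV hs hu fun ε hε => by
    obtain ⟨n, hn⟩ := exists_pow_lt_of_lt_one hε hμ1
    exact le_trans (h n) (smul_one_le_smul_one hs hn.le)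

/-- The inverse is the Vigier supremum `s` of the partial sums `xₙ` of the Neumann series
`∑ cⁱ`: since `1 + c * s` bounds every `xₙ₊₁ = 1 + c * xₙ`, `(1 - c) * s ≤ 1`; and
`1 - (1 - c) * s ≤ 1 - (1 - c) * xₙ = cⁿ ≤ μⁿ • 1`. -/
lemma exists_inv_one_sub (hCV : er.HasCV) (hs : er.IsCone) {c : R} (hc : c ∈ er.Epos) {μ : ℝ}
    (hμ0 : 0 ≤ μ) (hμ1 : μ < 1) (hcμ : er.le c (μ • 1)) :
    ∃ s ∈ er.G, (1 - c) * s = 1 ∧ s * (1 - c) = 1 := by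
  set x : ℕ → R := fun n => ∑ i ∈ Finset.range n, c ^ i
  have hcx : ∀ n, Commute c (x n) := fun n =>
    Commute.sum_right _ _ _ fun i _ => (Commute.refl c).pow_right i
  have hmono : ∀ n, er.le (x n) (x (n + 1)) := fun n => by
    simpa [ERing.le, x, Finset.sum_range_succ] using pow_mem_Epos hc n
  obtain ⟨s, ⟨hsG, hub, hmin⟩, hsCC⟩ := hCV x
    (fun n => mem_G_of_mem_Epos (sum_mem_Epos fun i _ => pow_mem_Epos hc i)) hmono
    (fun m n => (Commute.sum_left _ _ _ fun i _ => (hcx n).pow_left i).eq)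
    ⟨_, smul_mem_G hs _ one_mem_G, geom_sum_le_smul_one hs hc hμ1 hcμ⟩
  have hxs : ∀ n, s - x n ∈ er.Epos := fun n => hub _ ⟨n, rfl⟩
  have hcs : Commute c s := (hsCC.2 c ⟨mem_G_of_mem_Epos hc, by
    rintro _ ⟨n, rfl⟩; exact (hcx n).eq⟩).symm
  have hu : 1 - (1 - c) * s ∈ er.Epos := by
    have hle : er.le s (1 + c * s) := hmin _ (add_mem_G one_mem_G
      (mul_mem_G hs (mem_G_of_mem_Epos hc) hsG hcs)) <| by
      rintro _ ⟨n, rfl⟩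
      have hsplit : 1 + c * s - x n = c ^ n + c * (s - x n) := by
        have h : (1 - c) * x n = 1 - c ^ n := mul_neg_geom_sum c n
        rw [show c ^ n = 1 - (1 - c) * x n by rw [h]; abel]
        simp only [sub_mul, mul_sub, one_mul]
        abel
      show _ ∈ er.Epos
      rw [hsplit]
      exact add_mem_Epos (pow_mem_Epos hc n) (mul_mem_Epos hc (hxs n) (hcs.sub_right (hcx n)))
    have hus : 1 + c * s - s = 1 - (1 - c) * s := by
      rw [sub_mul, one_mul]
      abel
    exact hus ▸ hle
  have hu_le : ∀ n, er.le (1 - (1 - c) * s) (μ ^ n • 1) := by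
    intro n
    have hsplit : μ ^ n • 1 - (1 - (1 - c) * s) =
        (1 - c) * (s - x n) + (μ ^ n • 1 - c ^ n) := by
      rw [mul_sub, mul_neg_geom_sum]
      abel
    have h1c : 1 - c ∈ er.Epos := by
      have h : 1 - c = (μ • 1 - c) + (1 - μ) • (1 : R) := by
        rw [sub_smul, one_smul]
        abel
      rw [h]
      exact add_mem_Epos hcμ (smul_mem_Epos hs (sub_nonneg.2 hμ1.le) one_mem_Epos)
    show _ ∈ er.Epos
    rw [hsplit]
    exact add_mem_Epos (mul_mem_Epos h1c (hxs n) (((Commute.one_left s).sub_left hcs).sub_right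
      ((Commute.one_left _).sub_left (hcx n))))
      (pow_le_pow_smul_one hs hc hμ0 hcμ n)
  have hcs1 : (1 - c) * s = 1 :=
    (sub_eq_zero.1 (eq_zero_of_le_pow_smul_one hCV hs hu hμ1 hu_le)).symm
  exact ⟨s, hsG, hcs1, ((Commute.one_left s).sub_left hcs).eq ▸ hcs1⟩

lemma exists_inv_of_smul_one_le (hCV : er.HasCV) (hs : er.IsCone) {m : R} (hm : m ∈ er.G)
    {l : ℝ} (hl : 0 < l) (hlm : er.le (l • 1) m) : ∃ k ∈ er.G, m * k = 1 ∧ k * m = 1 := by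
  obtain ⟨v, hv, hmv⟩ := exists_le_smul_one hs hm
  set w := max v l
  have hw : 0 < w := lt_max_of_lt_right hl
  have hlw : l / w ≤ 1 := (div_le_one hw).2 (le_max_right v l)
  have hcμ : er.le (1 - w⁻¹ • m) ((1 - l / w) • 1) := by
    have := smul_le_smul hs (inv_nonneg.2 hw.le) hlm
    simpa [ERing.le, sub_smul, smul_smul, div_eq_inv_mul] using this
  have hc : 1 - w⁻¹ • m ∈ er.Epos := by
    have := smul_le_smul hs (inv_nonneg.2 hw.le)
      (le_trans hmv (smul_one_le_smul_one hs (le_max_left v l)))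
    rwa [smul_smul, inv_mul_cancel₀ hw.ne', one_smul] at this
  obtain ⟨s, hsG, hms, hsm⟩ := exists_inv_one_sub hCV hs hc (sub_nonneg.2 hlw)
    (sub_lt_self 1 (div_pos hl hw)) hcμ
  rw [sub_sub_cancel] at hms hsm
  refine ⟨w⁻¹ • s, smul_mem_G hs _ hsG, ?_, ?_⟩
  · rwa [mul_smul_comm, ← smul_mul_assoc]
  · rwa [smul_mul_assoc, ← mul_smul_comm]

end Inverse

section SquareRoot

variable {R : Type*} [Ring R] [Algebra ℝ R] {er : ERing R}

noncomputable def sqrtApprox (c : R) : ℕ → R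
  | 0 => 0
  | n + 1 => sqrtApprox c n + (2⁻¹ : ℝ) • (c - sqrtApprox c n ^ 2)

lemma commute_sqrtApprox {c j : R} (hjc : Commute j c) (n : ℕ) :
    Commute j (sqrtApprox c n) := by
  induction n with
  | zero => exact Commute.zero_right j
  | succ n ih => exact ih.add_right ((hjc.sub_right (ih.pow_right 2)).smul_right _)

lemma sub_sqrtApprox_succ_sq (c : R) (n : ℕ) :
    c - sqrtApprox c (n + 1) ^ 2 = (c - sqrtApprox c n ^ 2) *
      (1 - sqrtApprox c n - (4⁻¹ : ℝ) • (c - sqrtApprox c n ^ 2)) := by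
  set x := sqrtApprox c n
  set δ := c - x ^ 2
  have hxδ : Commute x δ := (commute_sqrtApprox (Commute.refl c) n).symm.sub_right
    ((Commute.refl x).pow_right 2)
  have hc : c = δ + x ^ 2 := (sub_add_cancel c _).symm
  rw [show sqrtApprox c (n + 1) = x + (2⁻¹ : ℝ) • δ from rfl, hc]
  simp only [sq, add_mul, mul_add, mul_sub, mul_one, smul_mul_assoc, mul_smul_comm, smul_add,
    smul_smul, hxδ.eq]
  module

lemma sqrtApprox_bounds (hs : er.IsCone) {c : R} (hc : c ∈ er.Epos) (hc1 : er.le c 1) (n : ℕ) :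
    sqrtApprox c n ∈ er.Epos ∧ er.le (sqrtApprox c n) 1 ∧ er.le (sqrtApprox c n ^ 2) c := by
  induction n with
  | zero => simpa [sqrtApprox, ERing.le] using ⟨zero_mem_Epos, one_mem_Epos, hc⟩
  | succ n ih =>
    obtain ⟨hx, hx1, hδ⟩ := ih
    set x := sqrtApprox c n
    set δ := c - x ^ 2
    have hstep : sqrtApprox c (n + 1) = x + (2⁻¹ : ℝ) • δ := rfl
    have hδx : Commute δ x :=
      (commute_sqrtApprox (Commute.refl c) n).sub_left ((Commute.refl x).pow_left 2)
    have hx'1 : er.le (sqrtApprox c (n + 1)) 1 := by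
      have h : 1 - sqrtApprox c (n + 1) = (2⁻¹ : ℝ) • ((1 - x) ^ 2 + (1 - c)) := by
        simp only [hstep, δ, sq, sub_mul, mul_sub, one_mul, mul_one]
        module
      show _ ∈ er.Epos
      rw [h]
      exact smul_mem_Epos hs (by norm_num)
        (add_mem_Epos (sq_mem_Epos (sub_mem_G one_mem_G (mem_G_of_mem_Epos hx))) hc1)
    refine ⟨add_mem_Epos hx (smul_mem_Epos hs (by norm_num) hδ), hx'1, ?_⟩
    have h : 1 - x - (4⁻¹ : ℝ) • δ =
        (2⁻¹ : ℝ) • ((1 - x) + (1 - sqrtApprox c (n + 1))) := by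
      rw [hstep]
      module
    show _ ∈ er.Epos
    rw [sub_sqrtApprox_succ_sq, h]
    exact mul_mem_Epos hδ (smul_mem_Epos hs (by norm_num) (add_mem_Epos hx1 hx'1))
      (h ▸ ((Commute.one_right δ).sub_right hδx).sub_right ((Commute.refl δ).smul_right _))

lemma sub_sqrtApprox_sq_succ_le (hs : er.IsCone) {c : R} (hc : c ∈ er.Epos) (hc1 : er.le c 1)
    (n : ℕ) : er.le (c - sqrtApprox c (n + 1) ^ 2) (c - sqrtApprox c n ^ 2) := by
  obtain ⟨hx, -, hδ⟩ := sqrtApprox_bounds hs hc hc1 n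
  set x := sqrtApprox c n
  set δ := c - x ^ 2
  have hδx : Commute δ x :=
    (commute_sqrtApprox (Commute.refl c) n).sub_left ((Commute.refl x).pow_left 2)
  have h : δ - (c - sqrtApprox c (n + 1) ^ 2) = δ * (x + (4⁻¹ : ℝ) • δ) := by
    rw [sub_sqrtApprox_succ_sq]
    change δ - δ * (1 - x - (4⁻¹ : ℝ) • δ) = _
    simp only [mul_sub, mul_add, mul_one, mul_smul_comm]
    abel
  show _ ∈ er.Epos
  rw [h]
  exact mul_mem_Epos hδ (add_mem_Epos hx (smul_mem_Epos hs (by norm_num) hδ))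
    (hδx.add_right ((Commute.refl δ).smul_right _))

/-- The defects `c - xₖ²` decrease and `∑_{k < n} (c - xₖ²) = 2 xₙ`. -/
lemma natCast_smul_sub_sqrtApprox_sq_le (hs : er.IsCone) {c : R} (hc : c ∈ er.Epos)
    (hc1 : er.le c 1) (n : ℕ) :
    er.le ((n : ℝ) • (c - sqrtApprox c n ^ 2)) ((2 : ℝ) • sqrtApprox c n) := by
  induction n with
  | zero => simpa [sqrtApprox] using le_refl (0 : R)
  | succ n ih =>
    have h : (2 : ℝ) • sqrtApprox c (n + 1) -
          ((n + 1 : ℕ) : ℝ) • (c - sqrtApprox c (n + 1) ^ 2) =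
        ((2 : ℝ) • sqrtApprox c n - (n : ℝ) • (c - sqrtApprox c n ^ 2)) +
          ((n : ℝ) + 1) • ((c - sqrtApprox c n ^ 2) - (c - sqrtApprox c (n + 1) ^ 2)) := by
      rw [show sqrtApprox c (n + 1) = sqrtApprox c n + (2⁻¹ : ℝ) • (c - sqrtApprox c n ^ 2)
        from rfl]
      push_cast
      module
    show _ ∈ er.Epos
    rw [h]
    exact add_mem_Epos ih (smul_mem_Epos hs (by positivity) (sub_sqrtApprox_sq_succ_le hs hc hc1 n))

lemma sub_sqrtApprox_sq_le (hs : er.IsCone) {c : R} (hc : c ∈ er.Epos) (hc1 : er.le c 1) {n : ℕ}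
    (hn : 0 < n) : er.le (c - sqrtApprox c n ^ 2) ((2 / n : ℝ) • 1) := by
  have hn' : (0 : ℝ) < n := Nat.cast_pos.2 hn
  have h := smul_le_smul hs (inv_nonneg.2 hn'.le) <| le_trans
    (natCast_smul_sub_sqrtApprox_sq_le hs hc hc1 n)
    (smul_le_smul hs zero_le_two (sqrtApprox_bounds hs hc hc1 n).2.1)
  rwa [smul_smul, inv_mul_cancel₀ hn'.ne', one_smul, smul_smul, ← div_eq_inv_mul] at h

lemma add_smul_sub_sq_le (hs : er.IsCone) (c : R) {x y : R} (hx1 : er.le x 1) (hy1 : er.le y 1)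
    (hxy : er.le x y) (hcomm : Commute x y) :
    er.le (x + (2⁻¹ : ℝ) • (c - x ^ 2)) (y + (2⁻¹ : ℝ) • (c - y ^ 2)) := by
  have h : y + (2⁻¹ : ℝ) • (c - y ^ 2) - (x + (2⁻¹ : ℝ) • (c - x ^ 2)) =
      (2⁻¹ : ℝ) • ((y - x) * ((1 - y) + (1 - x))) := by
    simp only [sq, mul_add, mul_sub, sub_mul, mul_one, hcomm.eq]
    module
  show _ ∈ er.Epos
  rw [h]
  exact smul_mem_Epos hs (by norm_num) (mul_mem_Epos hxy (add_mem_Epos hy1 hx1)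
    (((Commute.one_right _).sub_right ((Commute.refl y).sub_left hcomm)).add_right
      ((Commute.one_right _).sub_right (hcomm.symm.sub_left (Commute.refl x)))))

/-- `s` is the Vigier supremum of the `xₙ`. As `x ↦ x + ½ (c - x²)` is monotone on commuting
elements below `1`, `s + ½ (c - s²)` bounds every `xₙ₊₁`, whence `s² ≤ c`; and
`c - s² ≤ c - xₙ² ≤ (2 / n) • 1`. -/
lemma exists_sqrt_of_le_one (hCV : er.HasCV) (hs : er.IsCone) {c : R} (hc : c ∈ er.Epos)
    (hc1 : er.le c 1) :
    ∃ s ∈ er.Epos, s ^ 2 = c ∧ ∀ j ∈ er.G, Commute j c → Commute j s := by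
  set x := sqrtApprox c
  have hb := sqrtApprox_bounds hs hc hc1
  have hxG : ∀ n, x n ∈ er.G := fun n => mem_G_of_mem_Epos (hb n).1
  have hcx : ∀ n, Commute c (x n) := commute_sqrtApprox (Commute.refl c)
  have hmono : ∀ n, er.le (x n) (x (n + 1)) := fun n => by
    simpa [ERing.le, x, sqrtApprox] using
      smul_mem_Epos hs (by norm_num : (0 : ℝ) ≤ 2⁻¹) (hb n).2.2
  obtain ⟨s, ⟨hsG, hub, hmin⟩, hsCC⟩ := hCV x hxG hmono
    (fun m n => (commute_sqrtApprox (hcx m).symm n).eq) ⟨1, one_mem_G, fun n => (hb n).2.1⟩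
  have hcomm : ∀ j ∈ er.G, Commute j c → Commute j s := fun j hj hjc =>
    (hsCC.2 j ⟨hj, by rintro _ ⟨n, rfl⟩; exact (commute_sqrtApprox hjc n).eq⟩).symm
  have hxs : ∀ n, er.le (x n) s := fun n => hub _ ⟨n, rfl⟩
  have hxs' : ∀ n, Commute (x n) s := fun n => hcomm _ (hxG n) (hcx n).symm
  have hs0 : s ∈ er.Epos := by simpa [ERing.le, x, sqrtApprox] using hxs 0
  have hs1 : er.le s 1 := hmin 1 one_mem_G (by rintro _ ⟨n, rfl⟩; exact (hb n).2.1)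
  set w := c - s ^ 2
  have hwG : w ∈ er.G := sub_mem_G (mem_G_of_mem_Epos hc) (mem_G_of_mem_Epos (sq_mem_Epos hsG))
  have hw : w ∈ er.Epos := by
    have hle : er.le s (s + (2⁻¹ : ℝ) • w) :=
      hmin _ (add_mem_G hsG (smul_mem_G hs _ hwG)) <| by
      rintro _ ⟨n, rfl⟩
      exact le_trans (hmono n) (add_smul_sub_sq_le hs c (hb n).2.1 hs1 (hxs n) (hxs' n))
    have h2w := smul_mem_Epos hs zero_le_two (by simpa [ERing.le] using hle)
    rwa [smul_smul, mul_inv_cancel₀ two_ne_zero, one_smul] at h2w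
  have hw_le : ∀ n, er.le w (c - x n ^ 2) := fun n => by
    have h : c - x n ^ 2 - w = (s + x n) * (s - x n) := by
      rw [← (hxs' n).symm.sq_sub_sq]
      simp only [w]
      abel
    show _ ∈ er.Epos
    rw [h]
    exact mul_mem_Epos (add_mem_Epos hs0 (hb n).1) (hxs n)
      (((Commute.refl s).add_left (hxs' n)).sub_right ((hxs' n).symm.add_left (Commute.refl _)))
  have hw0 : w = 0 := eq_zero_of_le_smul_one hCV hs hw fun ε hε => by
    obtain ⟨n, hn⟩ := exists_nat_gt (2 / ε)
    have hn0 : (0 : ℝ) < n := lt_trans (by positivity) hn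
    refine le_trans (hw_le n) (le_trans (sub_sqrtApprox_sq_le hs hc hc1 (Nat.cast_pos.1 hn0))
      (smul_one_le_smul_one hs ?_))
    rw [div_lt_iff₀ hε] at hn
    rw [div_le_iff₀ hn0]
    linarith
  exact ⟨s, hs0, (sub_eq_zero.1 hw0).symm, hcomm⟩

lemma exists_sqrt (hCV : er.HasCV) (hs : er.IsCone) {c : R} (hc : c ∈ er.Epos) :
    ∃ s ∈ er.Epos, s ^ 2 = c ∧ ∀ j ∈ er.G, Commute j c → Commute j s := by
  obtain ⟨v, hv, hcv⟩ := exists_le_smul_one hs (mem_G_of_mem_Epos hc)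
  have hc1 : er.le (v⁻¹ • c) 1 := by
    simpa [smul_smul, inv_mul_cancel₀ hv.ne'] using smul_le_smul hs (inv_nonneg.2 hv.le) hcv
  obtain ⟨s, hs0, hsq, hcomm⟩ :=
    exists_sqrt_of_le_one hCV hs (smul_mem_Epos hs (inv_nonneg.2 hv.le) hc) hc1
  refine ⟨√v • s, smul_mem_Epos hs (Real.sqrt_nonneg v) hs0, ?_,
    fun j hj hjc => (hcomm j hj (hjc.smul_right _)).smul_right _⟩
  rw [smul_pow, hsq, smul_smul, Real.sq_sqrt hv.le, mul_inv_cancel₀ hv.ne', one_smul]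

end SquareRoot

section AbsoluteValue

variable {R : Type*} [Ring R] [Algebra ℝ R] {er : ERing R}

lemma IsAbs.commute_of_commute_sq (hQA : er.HasQA) (hCV : er.HasCV) (hs : er.IsCone)
    {g m j : R} (hm : er.IsAbs g m) (hj : j ∈ er.G) (hjg : Commute j (g ^ 2)) : Commute j m := by
  have hm0 := hm.mem_Epos
  obtain ⟨hmG, -, hmg⟩ := hm
  obtain ⟨s, hs0, hsq, hcomm⟩ := exists_sqrt hCV hs (hmg ▸ sq_mem_Epos hmG)
  have hms : m = s := eq_of_sq_eq_of_commute hQA hm0 hs0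
    (hcomm m hmG (hmg ▸ Commute.self_pow m 2)) (hmg.trans hsq.symm)
  exact hms ▸ hcomm j hj hjg

lemma IsAbs.unique (hQA : er.HasQA) (hCV : er.HasCV) (hs : er.IsCone) {g m₁ m₂ : R}
    (h₁ : er.IsAbs g m₁) (h₂ : er.IsAbs g m₂) : m₁ = m₂ :=
  eq_of_sq_eq_of_commute hQA h₁.mem_Epos h₂.mem_Epos
    (h₂.commute_of_commute_sq hQA hCV hs h₁.1 (h₁.2.2 ▸ Commute.self_pow m₁ 2))
    (h₁.2.2.trans h₂.2.2.symm)


lemma posPart_negPart_of_inv (hQA : er.HasQA) (hCV : er.HasCV) (hs : er.IsCone)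
    {g m k a b : R} (hg : g ∈ er.G) (hm : er.IsAbs g m) (hk : k ∈ er.G) (hmk : m * k = 1)
    (hkm : k * m = 1) (ha : er.IsPosPart g a) (hb : er.IsNegPart g b) :
    a ∈ er.Epos ∧ b ∈ er.Epos ∧ a * b = 0 ∧ b * a = 0 ∧ a - b = g := by
  obtain ⟨haG, ma, hma, ha2⟩ := ha
  obtain ⟨hbG, mb, hmb, hb2⟩ := hb
  rw [hma.unique hQA hCV hs hm] at ha2
  rw [hmb.unique hQA hCV hs hm] at hb2
  have half : ∀ {x y : R}, x + x = y → x = (2⁻¹ : ℝ) • y := fun h => by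
    rw [← h]
    module
  have ha' := half ha2
  have hb' := half hb2
  have hgm : Commute g m := hm.commute_of_commute_sq hQA hCV hs hg (Commute.self_pow g 2)
  have hgg : g * g = m * m := by rw [← sq, ← sq, hm.2.2]
  have hm0 := hm.mem_Epos
  have hab : (m + g) * (m - g) = 0 := by
    rw [add_mul, mul_sub, mul_sub, hgm.eq, hgg]
    abel
  have hba : (m - g) * (m + g) = 0 := by
    rw [sub_mul, mul_add, mul_add, hgm.eq, hgg]
    abel
  refine ⟨?_, ?_, ?_, ?_, ?_⟩
  · refine mem_Epos_of_sq_eq_mul hm0 hk hmk hkm haG ?_ ?_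
    · rw [ha']; exact ((Commute.refl m).add_right hgm.symm).smul_right _
    · rw [ha', smul_pow, mul_smul_comm]
      simp only [sq, add_mul, mul_add, hgm.eq, hgg]
      module
  · refine mem_Epos_of_sq_eq_mul hm0 hk hmk hkm hbG ?_ ?_
    · rw [hb']; exact ((Commute.refl m).sub_right hgm.symm).smul_right _
    · rw [hb', smul_pow, mul_smul_comm]
      simp only [sq, sub_mul, mul_sub, hgm.eq, hgg]
      module
  · rw [ha', hb', smul_mul_smul_comm, hab, smul_zero]
  · rw [ha', hb', smul_mul_smul_comm, hba, smul_zero]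
  · rw [ha', hb']
    module

end AbsoluteValue

section Carrier

variable {R : Type*} [Ring R] {er : ERing R}

lemma IsCarrier.mem_Epos {z p : R} (hp : er.IsCarrier z p) : p ∈ er.Epos := by
  rw [hp.1.2]
  exact sq_mem_Epos hp.1.1

lemma IsCarrier.mul_eq_self {z p : R} (hp : er.IsCarrier z p) (hz : z ∈ er.Epos) : p * z = z := by
  obtain ⟨⟨hpG, hpp⟩, hcar⟩ := hp
  have hqG : 1 - p ∈ er.G := sub_mem_G one_mem_G hpG
  have hq : (1 - p) ^ 2 = 1 - p := by
    have hpp' : p * p = p := by rw [← sq, ← hpp]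
    simp only [sq, sub_mul, mul_sub, one_mul, mul_one, hpp']
    abel
  have hzq : z * (1 - p) = 0 := (hcar _ hqG).2 (by rw [mul_sub, mul_one, ← sq, ← hpp, sub_self])
  have hqz := (er.epos_v _ (hq ▸ sq_mem_Epos hqG) z hz (by rw [mul_assoc, hzq, mul_zero])).1
  rw [sub_mul, one_mul, sub_eq_zero] at hqz
  exact hqz.symm

lemma IsCarrier.mul_eq_zero_of_mul_eq_zero {a b pa pb : R} (hpa : er.IsCarrier a pa)
    (hpb : er.IsCarrier b pb) (hb : b ∈ er.Epos) (hab : a * b = 0) : pb * pa = 0 := by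
  have hpab : pa * b = 0 := (hpa.2 b (mem_G_of_mem_Epos hb)).1 hab
  have hbpa : b * pa = 0 := (er.epos_v pa hpa.mem_Epos b hb (by rw [hpab, zero_mul])).2
  exact (hpb.2 pa hpa.1.1).1 hbpa

lemma sq_sub_eq_one_of_isCarrier {a b pa pb h : R} (ha : a ∈ er.Epos) (hb : b ∈ er.Epos)
    (hab : a * b = 0) (hba : b * a = 0) (hpa : er.IsCarrier a pa) (hpb : er.IsCarrier b pb)
    (hh : (a - b) * h = 1) : (pa - pb) ^ 2 = 1 := by
  have hpab : pa * pb = 0 := hpb.mul_eq_zero_of_mul_eq_zero hpa ha hba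
  have hpba : pb * pa = 0 := hpa.mul_eq_zero_of_mul_eq_zero hpb hb hab
  have hpa_b : pa * b = 0 := (hpa.2 b (mem_G_of_mem_Epos hb)).1 hab
  have hpb_a : pb * a = 0 := (hpb.2 a (mem_G_of_mem_Epos ha)).1 hba
  have hfix : (pa + pb) * (a - b) = a - b := by
    rw [add_mul, mul_sub, mul_sub, hpa.mul_eq_self ha, hpa_b, hpb_a, hpb.mul_eq_self hb]
    abel
  have hsum : pa + pb = 1 := by
    calc pa + pb = (pa + pb) * ((a - b) * h) := by rw [hh, mul_one]
      _ = 1 := by rw [← mul_assoc, hfix, hh]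
  rw [sq, sub_mul, mul_sub, mul_sub, hpab, hpba, ← sq, ← hpa.1.2, ← sq, ← hpb.1.2, ← hsum]
  abel

end Carrier

end ERing

/-- In an AH-algebra (with real scalars), the following are
equivalent: (i) `g` is invertible; (ii) `|g|` is invertible; (iii) `λ·1 ≤ |g|` for
some real `λ > 0`. Moreover, if `g⁻¹` exists, then `g⁻¹ ∈ CC(g)` and the signum
`s = (g⁺)° − (g⁻)°` satisfies `s² = 1`. -/
theorem stmt11 {R : Type*} [Ring R] [Algebra ℝ R] (er : ERing R) (hAH : er.IsAH)
    (hscal : ∀ l : ℝ, 0 ≤ l → ∀ a ∈ er.Epos, l • a ∈ er.Epos)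
    (g m a b pa pb : R) (hg : g ∈ er.G) (hm : er.IsAbs g m)
    (ha : er.IsPosPart g a) (hb : er.IsNegPart g b)
    (hpa : er.IsCarrier a pa) (hpb : er.IsCarrier b pb) :
    ((∃ h ∈ er.G, g * h = 1 ∧ h * g = 1) ↔ (∃ h ∈ er.G, m * h = 1 ∧ h * m = 1)) ∧
    ((∃ h ∈ er.G, g * h = 1 ∧ h * g = 1) ↔
      (∃ l : ℝ, 0 < l ∧ er.le (l • (1 : R)) m)) ∧
    (∀ h ∈ er.G, g * h = 1 → h * g = 1 → h ∈ er.CC {g}) ∧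
    ((∃ h ∈ er.G, g * h = 1 ∧ h * g = 1) → (pa - pb) ^ 2 = 1) := by
  obtain ⟨-, hQA, hCV⟩ := hAH
  have hinv_iff :
      (∃ h ∈ er.G, g * h = 1 ∧ h * g = 1) ↔ (∃ h ∈ er.G, m * h = 1 ∧ h * m = 1) :=
    ⟨fun ⟨h, hh, hgh, hhg⟩ => ERing.exists_inv_of_sq_eq hscal hm.1 hm.2.2 hh hgh hhg,
      fun ⟨h, hh, hmh, hhm⟩ => ERing.exists_inv_of_sq_eq hscal hg hm.2.2.symm hh hmh hhm⟩
  refine ⟨hinv_iff, hinv_iff.trans ⟨fun ⟨k, hk, hmk, hkm⟩ =>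
      ERing.exists_smul_one_le_of_inv hscal hm.mem_Epos hk hmk hkm,
      fun ⟨l, hl, hlm⟩ => ERing.exists_inv_of_smul_one_le hCV hscal hm.1 hl hlm⟩,
    fun h hh hgh hhg => ERing.mem_CC_singleton_of_inv hh hgh hhg, fun hginv => ?_⟩
  obtain ⟨k, hk, hmk, hkm⟩ := hinv_iff.1 hginv
  obtain ⟨h, -, hgh, -⟩ := hginv
  obtain ⟨haE, hbE, hab, hba, hg_eq⟩ :=
    ERing.posPart_negPart_of_inv hQA hCV hscal hg hm hk hmk hkm ha hb
  exact ERing.sq_sub_eq_one_of_isCarrier haE hbE hab hba hpa hpb (hg_eq ▸ hgh)
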